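/- Let c : ℝ → ℝ be a margin loss function such that c(z) < c(-z) for every z > 0. Fix p ∈ (1/2, 1) and define R(f) = p·c(f) + (1-p)·c(-f). If f* is a global minimizer of R with f* ≠ 0, then f* > 0. -/
import Mathlib


/-- Lin's Fisher-consistency result: if c(z) < c(-z) for all z > 0 and
p > 1/2, then any nonzero global minimizer of the population risk is
positive. -/
theorem margin_loss_fisher_consistent (c : ℝ → ℝ)
    (hc : ∀ z : ℝ, 0 < z → c z < c (-z))
    (p : ℝ) (hp : 1 / 2 < p) (hp1 : p < 1)
    (fstar : ℝ)
    (hmin : ∀ f : ℝ, p * c fstar + (1 - p) * c (-fstar) ≤ p * c f + (1 - p) * c (-f))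
    (hne : fstar ≠ 0) :
    0 < fstar := by
  by_contra h
  have hneg : fstar < 0 := lt_of_le_of_ne (not_lt.mp h) hne
  have h1 := hc (-fstar) (by linarith)
  rw [neg_neg] at h1
  have h2 := hmin (-fstar)
  rw [neg_neg] at h2
  nlinarith
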